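/- Let g : [R₁, ∞) → ℝ be a nonnegative, nondecreasing, differentiable function with g(R) > 0 for all R ≥ R₀ > e, and suppose there is a constant C > 0 such that g(R) ≤ C·R^{1/2}·(log R)^{1/2}·(g'(R))^{1/2} for all R ≥ R₀. Then ∫_{R₀}^{∞} dR/(R log R) ≤ C² ∫_{R₀}^{∞} g'(R)/g(R)² dR; since the left-hand side diverges, the right-hand integral cannot be finite, so no bounded such g exists. In particular, if additionally g is bounded above, a contradiction follows. -/

import Mathlib

/-!
The inequality says `(1 / g)' = -g' / g² ≤ -1 / (C² R log R) = -(log log R / C²)'`, so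
`log log R / C² + 1 / g R` is nonincreasing on `[R₀, ∞)`. As `1 / g > 0`, this bounds
`log log R` above by `log log R₀ + C² / g R₀`: the finite total variation of `1 / g` cannot
absorb the divergent integral of `1 / (R log R)`.
-/

open Real Set Filter

theorem antitoneOn_add_inv_of_deriv_mul_sq_le {D : Set ℝ} (hD : Convex ℝ D)
    {g g' h h' : ℝ → ℝ} (hg : ∀ x ∈ D, HasDerivAt g (g' x) x)
    (hh : ∀ x ∈ D, HasDerivAt h (h' x) x) (hpos : ∀ x ∈ D, 0 < g x)
    (hle : ∀ x ∈ D, h' x * g x ^ 2 ≤ g' x) :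
    AntitoneOn (fun x => h x + (g x)⁻¹) D := by
  have hderiv : ∀ x ∈ D, HasDerivAt (fun x => h x + (g x)⁻¹) (h' x + -g' x / g x ^ 2) x :=
    fun x hx => (hh x hx).add ((hg x hx).inv (hpos x hx).ne')
  refine antitoneOn_of_hasDerivWithinAt_nonpos hD
    (fun x hx => (hderiv x hx).continuousAt.continuousWithinAt)
    (fun x hx => (hderiv x (interior_subset hx)).hasDerivWithinAt) fun x hx => ?_
  have hx := interior_subset hx
  have h'_le : h' x ≤ g' x / g x ^ 2 := (le_div_iff₀ (pow_pos (hpos x hx) 2)).2 (hle x hx)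
  rw [neg_div]
  linarith

theorem stmt_0_general (g g' : ℝ → ℝ) (C R₀ : ℝ) (hC : 0 < C)
    (hR₀ : Real.exp 1 < R₀)
    (hpos : ∀ R, R₀ ≤ R → 0 < g R)
    (hderiv : ∀ R, R₀ ≤ R → HasDerivAt g (g' R) R)
    (hineq : ∀ R, R₀ ≤ R → (g R) ^ 2 ≤ C ^ 2 * R * Real.log R * g' R) :
    False := by
  have hlarge : ∀ R, R₀ ≤ R → 1 < R ∧ 1 < log R := fun R hR =>
    have he : exp 1 < R := hR₀.trans_le hR
    ⟨lt_of_le_of_lt (by linarith [add_one_le_exp (1 : ℝ)]) he,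
      (lt_log_iff_exp_lt ((exp_pos 1).trans he)).2 he⟩
  have hanti := antitoneOn_add_inv_of_deriv_mul_sq_le (convex_Ici R₀)
    (h := fun R => log (log R) / C ^ 2) hderiv
    (fun R hR => (Real.hasDerivAt_log_log (by linarith [hlarge R hR]) (by linarith [hlarge R hR])
      (by linarith [hlarge R hR])).div_const _)
    hpos fun R hR => by
      obtain ⟨hR1, hlog⟩ := hlarge R hR
      rw [show R⁻¹ / log R / C ^ 2 * g R ^ 2 = g R ^ 2 / (C ^ 2 * R * log R) by
        field_simp, div_le_iff₀ (by positivity)]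
      linarith [hineq R hR]
  have hunbdd : Tendsto (fun R => log (log R) / C ^ 2) atTop atTop :=
    (tendsto_log_atTop.comp tendsto_log_atTop).atTop_div_const (pow_pos hC 2)
  obtain ⟨T, hT, hR₀T⟩ := ((hunbdd.eventually_gt_atTop (log (log R₀) / C ^ 2 + (g R₀)⁻¹)).and
    (eventually_ge_atTop R₀)).exists
  have hdecr := hanti self_mem_Ici hR₀T hR₀T
  have hinv := inv_pos.2 (hpos T hR₀T)
  simp only at hT hdecr
  linarith

/-- Saint-Venant ODE argument, Case I: a positive nondecreasing differentiable
function satisfying `g(R)² ≤ C²·R·log R·g'(R)` on `[R₀, ∞)` with `R₀ > e`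
cannot be bounded above. -/
theorem stmt_0 (g g' : ℝ → ℝ) (C R₀ : ℝ) (hC : 0 < C)
    (hR₀ : Real.exp 1 < R₀)
    (hpos : ∀ R, R₀ ≤ R → 0 < g R)
    (hmono : MonotoneOn g (Set.Ici R₀))
    (hderiv : ∀ R, R₀ ≤ R → HasDerivAt g (g' R) R)
    (hineq : ∀ R, R₀ ≤ R → (g R) ^ 2 ≤ C ^ 2 * R * Real.log R * g' R)
    (hbdd : ∃ M : ℝ, ∀ R, R₀ ≤ R → g R ≤ M) :
    False :=
  stmt_0_general g g' C R₀ hC hR₀ hpos hderiv hineq
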